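/- arXiv:1311.6518 — 2 statements merged into one kernel-verified Lean document; each statement's English description precedes it below -/
import Mathlib

section
/- The dimension of the standard example S_n is n, for n ≥ 2. -/
/-- A relation `r` is a linear extension of the partial order on `α`. -/
def IsLinExt {α : Type*} [Preorder α] (r : α → α → Prop) : Prop :=
  IsLinearOrder α r ∧ ∀ a b : α, a ≤ b → r a b

/-- A finite family of linear extensions whose intersection is the order. -/
def IsRealizer {α : Type*} [Preorder α] {d : ℕ} (L : Fin d → (α → α → Prop)) : Prop :=
  (∀ i, IsLinExt (L i)) ∧ ∀ a b : α, a ≤ b ↔ ∀ i, L i a b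

/-- Order dimension: minimum size of a realizer. -/
noncomputable def orderDim (α : Type*) [Preorder α] : ℕ :=
  sInf { d | ∃ L : Fin d → (α → α → Prop), IsRealizer L }

/-- `α` contains an induced copy of the standard example `S_k`. -/
def HasStdExample (α : Type*) [Preorder α] (k : ℕ) : Prop :=
  ∃ a b : Fin k → α,
    (∀ i j, a i ≤ a j ↔ i = j) ∧
    (∀ i j, b i ≤ b j ↔ i = j) ∧
    (∀ i j, a i ≤ b j ↔ i ≠ j) ∧
    (∀ i j, ¬ b i ≤ a j)

/-- `α` is `S_k`-free. -/
def SkFree (α : Type*) [Preorder α] (k : ℕ) : Prop := ¬ HasStdExample α k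

/-- `(A,B)` is a bipartition of the (height two) poset `α`. -/
def IsBipartition {α : Type*} [Preorder α] (A B : Set α) : Prop :=
  (∀ x, x ∈ A ∨ x ∈ B) ∧ (∀ x, ¬(x ∈ A ∧ x ∈ B)) ∧
  ∀ x y : α, x < y → x ∈ A ∧ y ∈ B

def Incomp {α : Type*} [Preorder α] (x y : α) : Prop := ¬ x ≤ y ∧ ¬ y ≤ x

def CriticalPair {α : Type*} [Preorder α] (x y : α) : Prop :=
  Incomp x y ∧ (∀ z, z < x → z < y) ∧ (∀ z, y < z → x < z)

/-- `b` is a mate of `s i` with respect to the subset enumerated by `s`. -/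
def IsMate {α : Type*} [Preorder α] {k : ℕ} (s : Fin k → α) (i : Fin k) (b : α) : Prop :=
  Incomp (s i) b ∧ ∀ j, j ≠ i → s j < b
def stdLE (n : ℕ) : Fin n ⊕ Fin n → Fin n ⊕ Fin n → Prop
  | .inl i, .inl j => i = j
  | .inl i, .inr j => i ≠ j
  | .inr _, .inl _ => False
  | .inr i, .inr j => i = j

/-- The standard example `S_n`: minimal elements `inl i`, maximal elements `inr j`,
with `inl i < inr j` iff `i ≠ j`. -/
def stdExPO (n : ℕ) : PartialOrder (Fin n ⊕ Fin n) where
  le := stdLE n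
  lt a b := stdLE n a b ∧ ¬ stdLE n b a
  lt_iff_le_not_ge _ _ := Iff.rfl
  le_refl x := by cases x <;> simp [stdLE]
  le_trans a b c hab hbc := by
    cases a <;> cases b <;> cases c <;> simp_all [stdLE]
  le_antisymm a b hab hba := by
    cases a <;> cases b <;> simp_all [stdLE]

/-!
For each `k`, ranking `inl i (i ≠ k) < inr k < inl k < inr j (j ≠ k)` is a linear extension of
`S_n` that reverses the incomparable pair `(inl k, inr k)`, and these `n` extensions realize `S_n`.
Conversely, every realizer must reverse each pair `(inl i, inr i)`, and no linear extension reverses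
two of them, since it would contain the cycle `inl i ≤ inr j ≤ inl j ≤ inr i ≤ inl i`.
-/

open Function

section Realizer

variable {α β : Type*} [Preorder α] [LinearOrder β] {d : ℕ}

theorem isLinExt_of_injective_of_monotone {f : α → β} (hinj : Injective f)
    (hmono : Monotone f) : IsLinExt fun a b => f a ≤ f b :=
  ⟨hinj.isLinearOrder_onFun (· ≤ ·), fun _ _ hab => hmono hab⟩

theorem isRealizer_of_injective_of_monotone {f : Fin d → α → β} (hinj : ∀ k, Injective (f k))
    (hmono : ∀ k, Monotone (f k)) (hsep : ∀ a b, ¬ a ≤ b → ∃ k, f k b < f k a) :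
    IsRealizer fun k a b => f k a ≤ f k b := by
  refine ⟨fun k => isLinExt_of_injective_of_monotone (hinj k) (hmono k),
    fun a b => ⟨fun hab k => hmono k hab, fun h => ?_⟩⟩
  by_contra hab
  obtain ⟨k, hk⟩ := hsep a b hab
  exact (h k).not_gt hk


theorem le_of_isRealizer_of_stdExample {L : Fin d → α → α → Prop} (hL : IsRealizer L) {m : ℕ}
    (a b : Fin m → α) (hab : ∀ i j, a i ≤ b j ↔ i ≠ j) : m ≤ d := by
  obtain ⟨hlin, hiff⟩ := hL
  have hrev (i : Fin m) : ∃ k, L k (b i) (a i) := by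
    have hi : ¬ a i ≤ b i := fun h => (hab i i).mp h rfl
    obtain ⟨k, hk⟩ : ∃ k, ¬ L k (a i) (b i) := by simpa only [hiff, not_forall] using hi
    exact ⟨k, ((hlin k).1.total _ _).resolve_left hk⟩
  choose f hf using hrev
  suffices Injective f by simpa using Fintype.card_le_of_injective f this
  intro i j hfij
  by_contra hij
  have := (hlin (f i)).1
  have h₁ : L (f i) (a i) (b j) := (hlin _).2 _ _ ((hab i j).mpr hij)
  have h₂ : L (f i) (b j) (a j) := hfij ▸ hf j
  have h₃ : L (f i) (a j) (b i) := hfij ▸ (hlin _).2 _ _ ((hab j i).mpr (Ne.symm hij))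
  have : a i = b i := antisymm (_root_.trans h₁ (_root_.trans h₂ h₃)) (hf i)
  exact (hab i i).mp (this ▸ le_rfl) rfl

theorem orderDim_le_of_isRealizer {L : Fin d → α → α → Prop} (hL : IsRealizer L) :
    orderDim α ≤ d :=
  Nat.sInf_le ⟨L, hL⟩

theorem exists_isRealizer_orderDim {L : Fin d → α → α → Prop} (hL : IsRealizer L) :
    ∃ L' : Fin (orderDim α) → α → α → Prop, IsRealizer L' :=
  Nat.sInf_mem (s := {d | ∃ L : Fin d → α → α → Prop, IsRealizer L}) ⟨d, L, hL⟩

end Realizer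

/-- A copy of `Fin n ⊕ Fin n` that does not see the disjoint-sum order. -/
def StdExample (n : ℕ) : Type := Fin n ⊕ Fin n

instance (n : ℕ) : PartialOrder (StdExample n) := stdExPO n

namespace StdExample

variable {n : ℕ}

def rank (k : Fin n) : StdExample n → ℕ
  | .inl i => if i = k then n + 1 else i
  | .inr j => if j = k then n else n + 2 + j

theorem rank_injective (k : Fin n) : Injective (rank k) := by
  rintro (i | i) (j | j) h <;> simp only [rank] at h <;> split_ifs at h <;> grind

theorem rank_monotone (k : Fin n) : Monotone (rank k) := by
  rintro (i | i) (j | j) (hij : stdLE n _ _) <;> simp only [stdLE] at hij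
  all_goals simp only [rank]; split_ifs <;> grind

theorem exists_rank_lt_of_not_le (hn : 2 ≤ n) (a b : StdExample n) (h : ¬ a ≤ b) :
    ∃ k, rank k b < rank k a := by
  rcases a with i | i <;> rcases b with j | j <;> change ¬ stdLE n _ _ at h <;>
    simp only [stdLE, not_not] at h
  · exact ⟨i, by simp [rank, Ne.symm h]⟩
  · exact ⟨i, by simp [rank, h]⟩
  · have := Fin.nontrivial_iff_two_le.mpr hn
    obtain ⟨k, hk⟩ := exists_ne i
    exact ⟨k, by simp only [rank, hk.symm, if_false]; split_ifs <;> omega⟩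
  · exact ⟨j, by simp [rank, h]; omega⟩

theorem isRealizer_rank (hn : 2 ≤ n) :
    IsRealizer fun k (a b : StdExample n) => rank k a ≤ rank k b :=
  isRealizer_of_injective_of_monotone rank_injective rank_monotone (exists_rank_lt_of_not_le hn)

theorem orderDim_eq (hn : 2 ≤ n) : orderDim (StdExample n) = n := by
  have hR := isRealizer_rank hn
  obtain ⟨L, hL⟩ := exists_isRealizer_orderDim hR
  exact le_antisymm (orderDim_le_of_isRealizer hR)
    (le_of_isRealizer_of_stdExample hL Sum.inl Sum.inr fun _ _ => Iff.rfl)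

end StdExample

/-- The dimension of the standard example `S_n` is `n`, for `n ≥ 2`. -/
theorem stmt4 (n : ℕ) (hn : 2 ≤ n) :
    @orderDim (Fin n ⊕ Fin n) (stdExPO n).toPreorder = n :=
  StdExample.orderDim_eq hn
end

section
/- Let k ≥ 3 be fixed and let r(n) denote the minimum over all k-colorings of the complete k-uniform hypergraph on n vertices of the maximum size of a monochromatic set. Let P be a bipartite S_k-free poset with bipartition (A,B) where |A| ≥ n and r(n) ≥ 2. Then with c = 3k·2^k, for every integer q with 2 ≤ q ≤ r(n), there exists Q ⊆ A with |Q| = q such that dim(P) ≤ dim(P − Q) + c·ln q. -/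
/-- `H` is monochromatic for the coloring `χ` of the `k`-subsets. -/
def MonoSet {n c : ℕ} (k : ℕ) (χ : Finset (Fin n) → Fin c) (H : Finset (Fin n)) : Prop :=
  ∀ s t : Finset (Fin n), s ⊆ H → t ⊆ H → s.card = k → t.card = k → χ s = χ t

/-- `r(n)`: the minimum over `k`-colorings of the `k`-subsets of `[n]` of the
size of a largest monochromatic subset. -/
noncomputable def monoRamsey (k n : ℕ) : ℕ :=
  sInf { m | ∃ χ : Finset (Fin n) → Fin k,
    m = sSup { c | ∃ H : Finset (Fin n), H.card = c ∧ MonoSet k χ H } }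

/-!
Enumerate `n` elements of `A` and colour each `k`-subset by the position of one of its elements
without a mate; such an element exists because `P` is `S_k`-free. In a monochromatic set `Q` of
size `q`, every `y` incomparable to a point `a ∈ Q` lies above at most `k - 2` points of `Q`
before `a` or at most `k - 2` after it, since otherwise `y` would be a mate of `a` in a suitable
`k`-subset. A realizer of `P` is then obtained from one of `P − Q` with `Q` put at the bottom,
two extensions with `Q` at the bottom in increasing and decreasing order, and two extensions
for each member of a family of subsets of `Q` isolating every point from every set of at most
`k - 2` other points. A greedy choice gives such a family of size `2^(k-1) (2k-2) ln q + 1`.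
-/

open Finset

section LinearExtension

variable {α : Type*} [PartialOrder α]

/-- Linear extensions are built from monotone keys: sort along `κ`, break ties with `L`. -/
def keyLex (L : α → α → Prop) (κ : α → ℕ) (x y : α) : Prop :=
  κ x < κ y ∨ (κ x = κ y ∧ L x y)

theorem IsLinExt.keyLex {L : α → α → Prop} (hL : IsLinExt L) {κ : α → ℕ} (hκ : Monotone κ) :
    IsLinExt (keyLex L κ) := by
  have : IsLinearOrder α L := hL.1
  refine ⟨{ refl := ?_, trans := ?_, antisymm := ?_, total := ?_ }, ?_⟩
  · exact fun x => Or.inr ⟨rfl, refl_of L x⟩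
  · rintro x y z (h | ⟨e, h⟩) (h' | ⟨e', h'⟩)
    · exact Or.inl (h.trans h')
    · exact Or.inl (e' ▸ h)
    · exact Or.inl (e ▸ h')
    · exact Or.inr ⟨e.trans e', trans_of L h h'⟩
  · rintro x y (h | ⟨e, h⟩) (h' | ⟨e', h'⟩)
    · omega
    · omega
    · omega
    · exact antisymm_of L h h'
  · intro x y
    rcases lt_trichotomy (κ x) (κ y) with h | h | h
    · exact Or.inl (Or.inl h)
    · exact (total_of L x y).imp (fun h' => Or.inr ⟨h, h'⟩) (fun h' => Or.inr ⟨h.symm, h'⟩)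
    · exact Or.inr (Or.inl h)
  · intro x y hxy
    exact (hκ hxy).lt_or_eq.imp id fun h => ⟨h, hL.2 x y hxy⟩

omit [PartialOrder α] in
theorem not_keyLex_of_lt {L : α → α → Prop} {κ : α → ℕ} {x y : α} (h : κ y < κ x) :
    ¬ keyLex L κ x y := by
  rintro (h' | ⟨e, -⟩) <;> omega

theorem exists_isLinExt (α : Type*) [PartialOrder α] : ∃ L : α → α → Prop, IsLinExt L := by
  obtain ⟨L, hL, hle⟩ := extend_partialOrder ((· ≤ ·) : α → α → Prop)
  exact ⟨L, hL, fun x y h => hle x y h⟩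

theorem exists_realizer_of_separating (K : Finset (α → ℕ)) (hmono : ∀ κ ∈ K, Monotone κ)
    (hsep : ∀ x y : α, ¬ x ≤ y → ∃ κ ∈ K, κ y < κ x) :
    ∃ L : Fin K.card → (α → α → Prop), IsRealizer L := by
  obtain ⟨L, hL⟩ := exists_isLinExt α
  let e := K.equivFin.symm
  refine ⟨fun i => keyLex L (e i), fun i => hL.keyLex (hmono _ (e i).2), fun x y => ?_⟩
  refine ⟨fun h i => (hL.keyLex (hmono _ (e i).2)).2 x y h, fun h => ?_⟩
  by_contra hxy
  obtain ⟨κ, hκ, hlt⟩ := hsep x y hxy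
  have := h (e.symm ⟨κ, hκ⟩)
  simp only [e, Equiv.apply_symm_apply] at this
  exact not_keyLex_of_lt hlt this

theorem orderDim_le_card_of_separating (K : Finset (α → ℕ)) (hmono : ∀ κ ∈ K, Monotone κ)
    (hsep : ∀ x y : α, ¬ x ≤ y → ∃ κ ∈ K, κ y < κ x) : orderDim α ≤ K.card :=
  Nat.sInf_le (exists_realizer_of_separating K hmono hsep)

theorem exists_realizer_orderDim (α : Type*) [PartialOrder α] [Finite α] :
    ∃ L : Fin (orderDim α) → (α → α → Prop), IsRealizer L := by
  classical
  have := Fintype.ofFinite α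
  refine Nat.sInf_mem (s := {d | ∃ L : Fin d → (α → α → Prop), IsRealizer L})
    ⟨_, exists_realizer_of_separating (univ.image fun c x => if c ≤ x then 1 else 0) ?_ ?_⟩
  · simp only [mem_image, mem_univ, true_and, forall_exists_index, forall_apply_eq_imp_iff]
    intro c x y hxy
    by_cases hcx : c ≤ x
    · simp [hcx, hcx.trans hxy]
    · simp [hcx]
  · exact fun x y hxy => ⟨_, mem_image_of_mem _ (mem_univ x), by simp [hxy]⟩

end LinearExtension

section Rank

variable {γ : Type*} [PartialOrder γ] [Finite γ] {L : γ → γ → Prop}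

noncomputable def linRank (L : γ → γ → Prop) (x : γ) : ℕ := {z | L z x}.ncard

theorem IsLinExt.linRank_le (hL : IsLinExt L) {x y : γ} (h : L x y) :
    linRank L x ≤ linRank L y := by
  have : IsLinearOrder γ L := hL.1
  exact Set.ncard_le_ncard fun z hz => trans_of L hz h

theorem IsLinExt.linRank_lt (hL : IsLinExt L) {x y : γ} (h : L x y) (hne : x ≠ y) :
    linRank L x < linRank L y := by
  have : IsLinearOrder γ L := hL.1
  refine Set.ncard_lt_ncard ⟨fun z hz => trans_of L hz h, fun hsub => hne ?_⟩
  exact antisymm_of L h (hsub (refl_of L y))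

end Rank

section Complement

variable {α : Type*}

open scoped Classical in
noncomputable def extendKey (Q : Finset α) (κ : {x // x ∉ Q} → ℕ) (x : α) : ℕ :=
  if h : x ∈ Q then 0 else κ ⟨x, h⟩ + 1

theorem extendKey_of_notMem {Q : Finset α} (κ : {x // x ∉ Q} → ℕ) {x : α} (hx : x ∉ Q) :
    extendKey Q κ x = κ ⟨x, hx⟩ + 1 := by
  simp [extendKey, hx]

theorem monotone_extendKey [PartialOrder α] {Q : Finset α} (hQ : ∀ x ∈ Q, IsMin x)
    {κ : {x // x ∉ Q} → ℕ} (hκ : Monotone κ) : Monotone (extendKey Q κ) := by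
  intro x y hxy
  by_cases hy : y ∈ Q
  · rw [(hQ y hy).eq_of_le hxy]
  by_cases hx : x ∈ Q
  · simp [extendKey, hx]
  rw [extendKey_of_notMem κ hx, extendKey_of_notMem κ hy]
  exact Nat.succ_le_succ (hκ (Subtype.mk_le_mk.2 hxy))

theorem exists_extendKey_linRank_lt [PartialOrder α] [Finite α] {Q : Finset α} {d : ℕ}
    {L : Fin d → ({x // x ∉ Q} → {x // x ∉ Q} → Prop)} (hL : IsRealizer L) {x y : α}
    (hx : x ∉ Q) (hy : y ∉ Q) (hxy : ¬ x ≤ y) :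
    ∃ i, extendKey Q (linRank (L i)) y < extendKey Q (linRank (L i)) x := by
  obtain ⟨i, hi⟩ : ∃ i, ¬ L i ⟨x, hx⟩ ⟨y, hy⟩ := by
    by_contra! h
    exact hxy ((hL.2 ⟨x, hx⟩ ⟨y, hy⟩).2 h)
  have : IsLinearOrder _ (L i) := (hL.1 i).1
  refine ⟨i, ?_⟩
  rw [extendKey_of_notMem _ hx, extendKey_of_notMem _ hy]
  refine Nat.succ_lt_succ ((hL.1 i).linRank_lt ((total_of _ _ _).resolve_left hi) ?_)
  rintro ⟨⟩
  exact hxy le_rfl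

theorem orderDim_le_orderDim_compl_add [PartialOrder α] [Finite α] (Q : Finset α)
    (hQ : ∀ x ∈ Q, IsMin x) (K : Finset (α → ℕ)) (hmono : ∀ κ ∈ K, Monotone κ)
    (hsep : ∀ x y : α, ¬ x ≤ y → x ∈ Q ∨ y ∈ Q → ∃ κ ∈ K, κ y < κ x) :
    orderDim α ≤ orderDim {x // x ∉ Q} + K.card := by
  classical
  obtain ⟨L, hL⟩ := exists_realizer_orderDim {x // x ∉ Q}
  let KQ : Finset (α → ℕ) := univ.image fun i => extendKey Q (linRank (L i))
  have hKQ : KQ.card ≤ orderDim {x // x ∉ Q} := card_image_le.trans (by simp)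
  refine (orderDim_le_card_of_separating (KQ ∪ K) ?_ ?_).trans
    ((card_union_le _ _).trans (by omega))
  · simp only [KQ, mem_union, mem_image, mem_univ, true_and]
    rintro κ (⟨i, rfl⟩ | hκ)
    · exact monotone_extendKey hQ fun _ _ h => (hL.1 i).linRank_le ((hL.1 i).2 _ _ h)
    · exact hmono κ hκ
  intro x y hxy
  by_cases hQ : x ∈ Q ∨ y ∈ Q
  · obtain ⟨κ, hκ, hlt⟩ := hsep x y hxy hQ
    exact ⟨κ, mem_union_right _ hκ, hlt⟩
  push Not at hQ
  obtain ⟨i, hlt⟩ := exists_extendKey_linRank_lt hL hQ.1 hQ.2 hxy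
  exact ⟨_, mem_union_left _ (mem_image_of_mem _ (mem_univ i)), hlt⟩

end Complement

def IsIsolating {ι : Type*} (t : ℕ) (𝓕 : Finset (Finset ι)) : Prop :=
  ∀ (m : ι) (W : Finset ι), m ∉ W → W.card ≤ t → ∃ F ∈ 𝓕, m ∈ F ∧ Disjoint F W

section Sequence

variable {α : Type*} [PartialOrder α] {q : ℕ} (u : Fin q → α)

open scoped Classical in
noncomputable def supKey (w : Fin q → ℕ) (x : α) : ℕ := (univ.filter fun j => u j ≤ x).sup w

open scoped Classical in
/-- Puts the range of `u` at the bottom, ordered by the weights `w ≤ q`. -/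
noncomputable def bottomKey (w : Fin q → ℕ) (x : α) : ℕ :=
  if x ∈ Set.range u then supKey u w x else q + 1

def upWeight (F : Finset (Fin q)) (j : Fin q) : ℕ := if j ∈ F then (j : ℕ) + 1 else 0

def downWeight (F : Finset (Fin q)) (j : Fin q) : ℕ := if j ∈ F then q - (j : ℕ) else 0

theorem monotone_supKey (w : Fin q → ℕ) : Monotone (supKey u w) :=
  fun _ _ hxy => sup_mono fun j hj => by simp_all [le_trans _ hxy]

variable {u}

theorem supKey_apply (hu : ∀ i j, u i ≤ u j → i = j) (w : Fin q → ℕ) (m : Fin q) :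
    supKey u w (u m) = w m := by
  classical
  have : univ.filter (fun j => u j ≤ u m) = {m} := by
    ext j
    simpa using ⟨hu j m, fun h => h ▸ le_rfl⟩
  simp [supKey, this]

theorem supKey_lt {w : Fin q → ℕ} {x : α} {v : ℕ} (hv : 0 < v) (h : ∀ j, u j ≤ x → w j < v) :
    supKey u w x < v :=
  (Finset.sup_lt_iff hv).2 fun j hj => h j (by simpa using hj)

theorem supKey_upWeight_lt {F : Finset (Fin q)} {m : Fin q} {x : α}
    (hF : ∀ j ∈ F, u j ≤ x → j < m) : supKey u (upWeight F) x < (m : ℕ) + 1 := by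
  refine supKey_lt (Nat.succ_pos _) fun j hj => ?_
  by_cases hjF : j ∈ F
  · simpa [upWeight, hjF] using hF j hjF hj
  · simp [upWeight, hjF]

theorem supKey_downWeight_lt {F : Finset (Fin q)} {m : Fin q} {x : α}
    (hF : ∀ j ∈ F, u j ≤ x → m < j) : supKey u (downWeight F) x < q - (m : ℕ) := by
  refine supKey_lt (by omega) fun j hj => ?_
  by_cases hjF : j ∈ F
  · have := hF j hjF hj
    simp only [downWeight, hjF, if_true]
    omega
  · simp [downWeight, hjF]

theorem monotone_bottomKey (hmin : ∀ j, IsMin (u j)) {w : Fin q → ℕ} (hw : ∀ j, w j ≤ q) :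
    Monotone (bottomKey u w) := by
  intro x y hxy
  by_cases hy : y ∈ Set.range u
  · obtain ⟨j, rfl⟩ := hy
    rw [(hmin j).eq_of_le hxy]
  have hx : supKey u w x ≤ q + 1 := (Finset.sup_le fun j _ => hw j).trans (Nat.le_succ q)
  unfold bottomKey
  split_ifs <;> omega

theorem bottomKey_apply (hu : ∀ i j, u i ≤ u j → i = j) (w : Fin q → ℕ) (m : Fin q) :
    bottomKey u w (u m) = w m := by
  simp [bottomKey, supKey_apply hu]

theorem bottomKey_of_notMem (w : Fin q → ℕ) {x : α} (hx : x ∉ Set.range u) :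
    bottomKey u w x = q + 1 := by
  simp [bottomKey, hx]

theorem exists_bottomKey_lt (hu : ∀ i j, u i ≤ u j → i = j) {x : α} {m : Fin q}
    (hxm : ¬ x ≤ u m) : ∃ w ∈ ({upWeight univ, downWeight univ} : Finset (Fin q → ℕ)),
      bottomKey u w (u m) < bottomKey u w x := by
  by_cases hx : x ∈ Set.range u
  · obtain ⟨j, rfl⟩ := hx
    have hjm : j ≠ m := by rintro rfl; exact hxm le_rfl
    rcases hjm.lt_or_gt with h | h
    · refine ⟨downWeight univ, by simp, ?_⟩
      simp only [bottomKey_apply hu, downWeight, mem_univ, if_true]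
      have := m.2
      omega
    · refine ⟨upWeight univ, by simp, ?_⟩
      simpa [bottomKey_apply hu, upWeight] using h
  · refine ⟨upWeight univ, by simp, ?_⟩
    rw [bottomKey_apply hu, bottomKey_of_notMem _ hx]
    simp only [upWeight, mem_univ, if_true]
    omega

open scoped Classical in
/-- If `y` lies above at most `t` earlier terms, a set of `𝓕` containing `m` and avoiding those
terms, weighted decreasingly, puts `u m` above `y`; symmetrically for later terms. -/
theorem exists_supKey_lt (hu : ∀ i j, u i ≤ u j → i = j) {t : ℕ} {𝓕 : Finset (Finset (Fin q))}
    (h𝓕 : IsIsolating t 𝓕) {m : Fin q} {y : α} (hy : y ∉ Set.range u) (hmy : ¬ u m ≤ y)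
    (hfew : #{j | j < m ∧ u j < y} ≤ t ∨ #{j | m < j ∧ u j < y} ≤ t) :
    ∃ F ∈ 𝓕, supKey u (downWeight F) y < supKey u (downWeight F) (u m) ∨
      supKey u (upWeight F) y < supKey u (upWeight F) (u m) := by
  have hlt : ∀ j, u j ≤ y → u j < y ∧ j ≠ m := fun j hj =>
    ⟨hj.lt_of_ne fun h => hy ⟨j, h⟩, by rintro rfl; exact hmy hj⟩
  rcases hfew with hsmall | hsmall
  · obtain ⟨F, hF, hmF, hdisj⟩ := h𝓕 m _ (by simp) hsmall
    refine ⟨F, hF, Or.inl ?_⟩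
    rw [supKey_apply hu]
    simp only [downWeight, hmF, if_true]
    refine supKey_downWeight_lt fun j hjF hj => ?_
    have : ¬ (j < m ∧ u j < y) := fun h => disjoint_left.1 hdisj hjF (by simpa using h)
    have := hlt j hj
    grind
  · obtain ⟨F, hF, hmF, hdisj⟩ := h𝓕 m _ (by simp) hsmall
    refine ⟨F, hF, Or.inr ?_⟩
    rw [supKey_apply hu]
    simp only [upWeight, hmF, if_true]
    refine supKey_upWeight_lt fun j hjF hj => ?_
    have : ¬ (m < j ∧ u j < y) := fun h => disjoint_left.1 hdisj hjF (by simpa using h)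
    have := hlt j hj
    grind

end Sequence

open scoped Classical in
theorem orderDim_le_of_few_below {α : Type*} [PartialOrder α] [Finite α] {q t : ℕ}
    (u : Fin q ↪ α) (hmin : ∀ j, IsMin (u j))
    (hfew : ∀ m y, Incomp (u m) y →
      #{j | j < m ∧ u j < y} ≤ t ∨ #{j | m < j ∧ u j < y} ≤ t)
    {𝓕 : Finset (Finset (Fin q))} (h𝓕 : IsIsolating t 𝓕) :
    orderDim α ≤ orderDim {x // x ∉ univ.map u} + (2 + 2 * 𝓕.card) := by
  have hu : ∀ i j, u i ≤ u j → i = j := fun i j h => u.injective ((hmin j).eq_of_le h)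
  have hmem : ∀ x, x ∈ univ.map u ↔ x ∈ Set.range u := by simp
  let K : Finset (α → ℕ) :=
    ({upWeight univ, downWeight univ} : Finset (Fin q → ℕ)).image (bottomKey u) ∪
      (𝓕.image fun F => supKey u (upWeight F)) ∪ 𝓕.image fun F => supKey u (downWeight F)
  have hK : K.card ≤ 2 + 2 * 𝓕.card := by
    grw [card_union_le, card_union_le, card_image_le, card_image_le, card_image_le,
      card_insert_le, card_singleton]
    omega
  refine (orderDim_le_orderDim_compl_add (univ.map u) (by simpa using hmin) K ?_ ?_).trans
    (by omega)
  · simp only [K, mem_union, mem_insert, mem_singleton, mem_image]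
    rintro κ ((⟨w, rfl | rfl, rfl⟩ | ⟨F, -, rfl⟩) | ⟨F, -, rfl⟩)
    · exact monotone_bottomKey hmin fun j => by simp [upWeight]
    · exact monotone_bottomKey hmin fun j => by simp [downWeight]
    · exact monotone_supKey u _
    · exact monotone_supKey u _
  intro x y hxy hxy'
  rw [hmem, hmem] at hxy'
  by_cases hy : y ∈ Set.range u
  · obtain ⟨m, rfl⟩ := hy
    obtain ⟨w, hw, hlt⟩ := exists_bottomKey_lt hu hxy
    exact ⟨_, mem_union_left _ (mem_union_left _ (mem_image_of_mem _ hw)), hlt⟩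
  obtain ⟨m, rfl⟩ := hxy'.resolve_right hy
  have hinc : Incomp (u m) y := ⟨hxy, fun h => hy ⟨m, ((hmin m).eq_of_le h).symm⟩⟩
  obtain ⟨F, hF, hlt | hlt⟩ := exists_supKey_lt hu h𝓕 hy hxy (hfew m y hinc)
  · exact ⟨_, mem_union_right _ (mem_image_of_mem _ hF), hlt⟩
  · exact ⟨_, mem_union_left _ (mem_union_right _ (mem_image_of_mem _ hF)), hlt⟩

section Isolating

theorem exists_cover_of_density {X Y : Type*} [DecidableEq X] (covers : X → Y → Prop)
    [∀ x, DecidablePred (covers x)] {β : ℝ} (hβ : β ≤ 1) (N : ℕ) (R₀ : Finset Y)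
    (hN : R₀.card * (1 - β) ^ N < 1)
    (hdense : ∀ R ⊆ R₀, ∃ x, β * R.card ≤ #{r ∈ R | covers x r}) :
    ∃ S : Finset X, S.card ≤ N ∧ ∀ r ∈ R₀, ∃ x ∈ S, covers x r := by
  induction N generalizing R₀ with
  | zero =>
    have : R₀.card < 1 := by exact_mod_cast (by simpa using hN : (R₀.card : ℝ) < 1)
    rw [Nat.lt_one_iff, card_eq_zero] at this
    exact ⟨∅, le_rfl, by simp [this]⟩
  | succ N ih =>
    obtain ⟨x, hx⟩ := hdense R₀ subset_rfl
    let R' := R₀.filter fun r => ¬ covers x r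
    have hsplit := card_filter_add_card_filter_not (s := R₀) (covers x)
    have hR' : (R'.card : ℝ) ≤ (1 - β) * R₀.card := by
      have : (R'.card : ℝ) = R₀.card - #{r ∈ R₀ | covers x r} := by
        rw [← hsplit]; push_cast; ring
      linarith
    have hN' : R'.card * (1 - β) ^ N < 1 :=
      calc (R'.card : ℝ) * (1 - β) ^ N ≤ (1 - β) * R₀.card * (1 - β) ^ N := by
            gcongr
        _ = R₀.card * (1 - β) ^ (N + 1) := by ring
        _ < 1 := hN
    obtain ⟨S, hS, hcov⟩ := ih R' hN' fun R hR => hdense R (hR.trans (filter_subset _ _))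
    refine ⟨insert x S, (card_insert_le _ _).trans (by omega), fun r hr => ?_⟩
    by_cases hxr : covers x r
    · exact ⟨x, mem_insert_self _ _, hxr⟩
    · obtain ⟨y, hy, hyr⟩ := hcov r (mem_filter.2 ⟨hr, hxr⟩)
      exact ⟨y, mem_insert_of_mem hy, hyr⟩

theorem mul_one_sub_pow_lt_one {n t : ℕ} {r : ℝ} (hn : 2 ≤ n) (hr : r ≤ n ^ (2 * t + 2)) :
    r * (1 - (2 ^ (t + 1) : ℝ)⁻¹) ^ (⌊2 ^ (t + 1) * (2 * t + 2) * Real.log n⌋₊ + 1) < 1 := by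
  -- `n ^ (2t+2) = exp ((2t+2) L)` and `(1 - β) ^ N ≤ exp (-β N)`, where `β N > (2t+2) L`
  set L := Real.log n
  set β : ℝ := (2 ^ (t + 1))⁻¹
  set x : ℝ := 2 ^ (t + 1) * (2 * t + 2) * L
  have hL : 0 < L := Real.log_pos (by exact_mod_cast hn)
  have hβ : β ≤ 1 := inv_le_one_of_one_le₀ (one_le_pow₀ one_le_two)
  have hr' : r ≤ Real.exp ((2 * t + 2) * L) := by
    rw [show (2 * t + 2 : ℝ) = ((2 * t + 2 : ℕ) : ℝ) by push_cast; ring, Real.exp_nat_mul,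
      Real.exp_log (by positivity)]
    exact_mod_cast hr
  have hpow : (1 - β) ^ (⌊x⌋₊ + 1) ≤ Real.exp (-(β * (⌊x⌋₊ + 1 : ℕ))) := by
    rw [show -(β * ((⌊x⌋₊ + 1 : ℕ) : ℝ)) = ((⌊x⌋₊ + 1 : ℕ) : ℝ) * -β by ring, Real.exp_nat_mul]
    exact pow_le_pow_left₀ (by linarith) (Real.one_sub_le_exp_neg β) _
  have hlt : (2 * t + 2) * L < β * (⌊x⌋₊ + 1 : ℕ) := by
    have : (2 * t + 2) * L = β * x := by simp only [β, x]; field_simp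
    rw [this]
    push_cast
    exact mul_lt_mul_of_pos_left (Nat.lt_floor_add_one x) (by positivity)
  calc r * (1 - β) ^ (⌊x⌋₊ + 1)
      ≤ Real.exp ((2 * t + 2) * L) * Real.exp (-(β * (⌊x⌋₊ + 1 : ℕ))) := by
        gcongr
    _ < 1 := by
        rw [← Real.exp_add, Real.exp_lt_one_iff]
        linarith

variable {ι : Type*} [Fintype ι] [DecidableEq ι]

theorem two_pow_card_le_card_isolating {m : ι} {W : Finset ι} (hm : m ∉ W) :
    2 ^ Fintype.card ι ≤ 2 ^ (W.card + 1) * #{F : Finset ι | m ∈ F ∧ Disjoint F W} := by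
  have hIcc : ({F : Finset ι | m ∈ F ∧ Disjoint F W} : Finset (Finset ι)) = Icc {m} Wᶜ := by
    ext F
    simp [subset_compl_iff_disjoint_right]
  have hmW : ({m} : Finset ι) ⊆ Wᶜ := by simpa using hm
  have hW : W.card < Fintype.card ι := card_lt_univ_of_notMem hm
  rw [hIcc, card_Icc_finset hmW, card_compl, card_singleton, ← pow_add]
  exact Nat.pow_le_pow_right (by norm_num) (by omega)

theorem exists_isolating_density (t : ℕ) (R : Finset (ι × Finset ι))
    (hR : ∀ r ∈ R, r.1 ∉ r.2 ∧ r.2.card ≤ t) :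
    ∃ F : Finset ι, R.card ≤ 2 ^ (t + 1) * #{r ∈ R | r.1 ∈ F ∧ Disjoint F r.2} := by
  suffices h : ∑ _F : Finset ι, R.card ≤
      ∑ F : Finset ι, 2 ^ (t + 1) * #{r ∈ R | r.1 ∈ F ∧ Disjoint F r.2} by
    obtain ⟨F, -, hF⟩ := exists_le_of_sum_le univ_nonempty h
    exact ⟨F, hF⟩
  have hswap : ∑ F : Finset ι, #{r ∈ R | r.1 ∈ F ∧ Disjoint F r.2} =
      ∑ r ∈ R, #{F : Finset ι | r.1 ∈ F ∧ Disjoint F r.2} := by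
    simp only [card_filter]
    exact sum_comm
  rw [← mul_sum, hswap, mul_sum, sum_const, card_univ, Fintype.card_finset, smul_eq_mul,
    mul_comm, ← smul_eq_mul, ← sum_const]
  refine sum_le_sum fun r hr => ?_
  obtain ⟨hm, ht⟩ := hR r hr
  calc 2 ^ Fintype.card ι ≤ 2 ^ (r.2.card + 1) * #{F : Finset ι | r.1 ∈ F ∧ Disjoint F r.2} :=
        two_pow_card_le_card_isolating hm
    _ ≤ _ := by gcongr; omega

theorem card_finset_card_le {t : ℕ} (hι : 1 ≤ Fintype.card ι) :
    #{W : Finset ι | W.card ≤ t} ≤ (t + 1) * Fintype.card ι ^ t := by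
  have hsub : ({W : Finset ι | W.card ≤ t} : Finset (Finset ι)) ⊆
      (range (t + 1)).biUnion fun i => powersetCard i univ := by
    intro W hW
    simp only [mem_filter, mem_univ, true_and] at hW
    simpa [Nat.lt_succ_iff] using hW
  calc _ ≤ _ := card_le_card hsub
    _ ≤ ∑ i ∈ range (t + 1), #(powersetCard i (univ : Finset ι)) := card_biUnion_le
    _ ≤ ∑ _i ∈ range (t + 1), Fintype.card ι ^ t := by
        refine sum_le_sum fun i hi => ?_
        rw [card_powersetCard, card_univ]
        exact (Nat.choose_le_pow _ _).trans
          (Nat.pow_le_pow_right hι (Nat.lt_succ_iff.1 (mem_range.1 hi)))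
    _ = _ := by simp

theorem card_isolation_pairs_le {t : ℕ} (hι : 2 ≤ Fintype.card ι) :
    #{r : ι × Finset ι | r.1 ∉ r.2 ∧ r.2.card ≤ t} ≤ Fintype.card ι ^ (2 * t + 2) := by
  set n := Fintype.card ι
  have hsub : ({r : ι × Finset ι | r.1 ∉ r.2 ∧ r.2.card ≤ t} : Finset _) ⊆
      univ ×ˢ ({W : Finset ι | W.card ≤ t} : Finset (Finset ι)) := fun r hr => by simp_all
  calc _ ≤ n * #{W : Finset ι | W.card ≤ t} := by simpa using card_le_card hsub
    _ ≤ n * ((t + 1) * n ^ t) := by gcongr; exact card_finset_card_le (by omega)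
    _ ≤ n * (n ^ (t + 1) * n ^ t) := by
        gcongr
        exact (Nat.lt_pow_self (by omega)).le
    _ = n ^ (2 * t + 2) := by ring

theorem exists_isIsolating (t : ℕ) (hι : 2 ≤ Fintype.card ι) :
    ∃ 𝓕 : Finset (Finset ι), IsIsolating t 𝓕 ∧
      (𝓕.card : ℝ) ≤ 2 ^ (t + 1) * (2 * t + 2) * Real.log (Fintype.card ι) + 1 := by
  set x : ℝ := 2 ^ (t + 1) * (2 * t + 2) * Real.log (Fintype.card ι)
  set R₀ : Finset (ι × Finset ι) := {r | r.1 ∉ r.2 ∧ r.2.card ≤ t} with hR₀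
  have hdense : ∀ R ⊆ R₀, ∃ F : Finset ι,
      (2 ^ (t + 1) : ℝ)⁻¹ * R.card ≤ #{r ∈ R | r.1 ∈ F ∧ Disjoint F r.2} := by
    intro R hR
    obtain ⟨F, hF⟩ := exists_isolating_density t R fun r hr => by simpa [hR₀] using hR hr
    refine ⟨F, (inv_mul_le_iff₀ (by positivity)).2 ?_⟩
    exact_mod_cast hF
  obtain ⟨𝓕, hcard, hcov⟩ := exists_cover_of_density (X := Finset ι)
    (fun F r => r.1 ∈ F ∧ Disjoint F r.2) (inv_le_one_of_one_le₀ (one_le_pow₀ one_le_two))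
    (⌊x⌋₊ + 1) R₀ (mul_one_sub_pow_lt_one hι (by exact_mod_cast card_isolation_pairs_le hι))
    (by exact hdense)
  refine ⟨𝓕, fun m W hm hW => hcov (m, W) (by simp [hR₀, hm, hW]), ?_⟩
  calc (𝓕.card : ℝ) ≤ ⌊x⌋₊ + 1 := by exact_mod_cast hcard
    _ ≤ x + 1 := by gcongr; exact Nat.floor_le (by positivity)

end Isolating

section Mates

variable {α : Type*} [PartialOrder α] {A B : Set α}

theorem IsBipartition.isMin (hbip : IsBipartition A B) {x : α} (hx : x ∈ A) : IsMin x := by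
  intro y hyx
  by_contra hxy
  exact hbip.2.1 x ⟨hx, (hbip.2.2 y x (lt_of_le_not_ge hyx hxy)).2⟩

theorem IsBipartition.isMax (hbip : IsBipartition A B) {x : α} (hx : x ∈ B) : IsMax x := by
  intro y hxy
  by_contra hyx
  exact hbip.2.1 x ⟨(hbip.2.2 x y (lt_of_le_not_ge hxy hyx)).1, hx⟩

theorem hasStdExample_of_forall_isMate {k : ℕ} (hk : 2 ≤ k) (hbip : IsBipartition A B)
    {g : Fin k → α} (hg : Function.Injective g) (hgA : ∀ i, g i ∈ A)
    (hmate : ∀ i, ∃ b, IsMate g i b) : HasStdExample α k := by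
  choose b hb using hmate
  have : Nontrivial (Fin k) := Fin.nontrivial_iff_two_le.2 hk
  have hbB : ∀ i, b i ∈ B := fun i =>
    let ⟨j, hj⟩ := exists_ne i
    (hbip.2.2 _ _ ((hb i).2 j hj)).2
  have hginc : ∀ i j, g i ≤ b j ↔ i ≠ j := fun i j =>
    ⟨by rintro h rfl; exact (hb i).1.1 h, fun h => ((hb j).2 i h).le⟩
  refine ⟨g, b, fun i j => ?_, fun i j => ?_, hginc, fun i j h => ?_⟩
  · exact ⟨fun h => hg ((hbip.isMin (hgA j)).eq_of_le h), fun h => h ▸ le_rfl⟩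
  · refine ⟨fun h => ?_, fun h => h ▸ le_rfl⟩
    by_contra hij
    have := (hginc i j).2 hij
    rw [(hbip.isMax (hbB i)).eq_of_ge h] at this
    exact (hginc i i).1 this rfl
  · have := (hbip.isMin (hgA j)).eq_of_le h
    exact hbip.2.1 _ ⟨hgA j, this ▸ hbB i⟩

variable {ι : Type*}

def IsMateIn (f : ι → α) (s : Finset ι) (x : ι) (b : α) : Prop :=
  Incomp (f x) b ∧ ∀ y ∈ s, y ≠ x → f y < b

theorem exists_forall_not_isMateIn {k : ℕ} (hk : 2 ≤ k) (hbip : IsBipartition A B)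
    (hfree : SkFree α k) {f : ι → α} (hf : Function.Injective f) (hfA : ∀ i, f i ∈ A)
    {s : Finset ι} (hs : s.card = k) : ∃ x ∈ s, ∀ b, ¬ IsMateIn f s x b := by
  let e : Fin k ≃ s := (s.equivFin.trans (finCongr hs)).symm
  by_contra! h
  refine hfree (hasStdExample_of_forall_isMate hk hbip (g := fun i => f (e i))
    (hf.comp (Subtype.val_injective.comp e.injective)) (fun i => hfA _) fun i => ?_)
  obtain ⟨b, hinc, hlt⟩ := h (e i) (e i).2
  exact ⟨b, hinc, fun j hj => hlt _ (e j).2 fun h => hj (e.injective (Subtype.ext h))⟩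

end Mates

section Monochromatic

variable {ι : Type*} [LinearOrder ι]

theorem card_filter_lt_lt_of_lt {s : Finset ι} {x y : ι} (hx : x ∈ s) (hxy : x < y) :
    #{z ∈ s | z < x} < #{z ∈ s | z < y} :=
  card_lt_card ⟨fun _ hz => mem_filter.2 ⟨(mem_filter.1 hz).1, (mem_filter.1 hz).2.trans hxy⟩,
    fun hsub => lt_irrefl x (mem_filter.1 (hsub (mem_filter.2 ⟨hx, hxy⟩))).2⟩

theorem eq_of_card_filter_lt_eq {s : Finset ι} {x y : ι} (hx : x ∈ s) (hy : y ∈ s)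
    (h : #{z ∈ s | z < x} = #{z ∈ s | z < y}) : x = y := by
  rcases lt_trichotomy x y with hxy | rfl | hxy
  · exact absurd h (card_filter_lt_lt_of_lt hx hxy).ne
  · rfl
  · exact absurd h (card_filter_lt_lt_of_lt hy hxy).ne'

theorem filter_lt_insert_union {L R : Finset ι} {m : ι} (hL : ∀ y ∈ L, y < m)
    (hR : ∀ y ∈ R, m < y) : {y ∈ insert m (L ∪ R) | y < m} = L := by
  ext y
  simp only [mem_filter, mem_insert, mem_union]
  constructor
  · rintro ⟨rfl | hy | hy, hym⟩
    · exact absurd hym (lt_irrefl _)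
    · exact hy
    · exact absurd ((hR y hy).trans hym) (lt_irrefl _)
  · exact fun hy => ⟨Or.inr (Or.inl hy), hL y hy⟩

open scoped Classical in
/-- Otherwise `m`, with earlier and later terms below `b` in the numbers dictated by the common
position, would form a `k`-subset in which `b` is a mate of `f m`. -/
theorem few_below_of_monochromatic {α : Type*} [PartialOrder α] {f : ι → α} {H : Finset ι}
    {k : ℕ} {χ : Finset ι → ℕ}
    (hχ : ∀ s ⊆ H, s.card = k → ∃ x ∈ s, #{y ∈ s | y < x} = χ s ∧ ∀ b, ¬ IsMateIn f s x b)
    (hmono : ∀ s ⊆ H, ∀ s' ⊆ H, s.card = k → s'.card = k → χ s = χ s')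
    {m : ι} (hm : m ∈ H) {b : α} (hmb : Incomp (f m) b) :
    #{j ∈ H | j < m ∧ f j < b} ≤ k - 2 ∨ #{j ∈ H | m < j ∧ f j < b} ≤ k - 2 := by
  by_contra! h
  set left := {j ∈ H | j < m ∧ f j < b}
  set right := {j ∈ H | m < j ∧ f j < b}
  have hdisj : Disjoint left right := disjoint_filter.2 fun j _ hl hr => lt_asymm hl.1 hr.1
  have hH : #(left ∪ right) ≤ #H :=
    card_le_card (union_subset (filter_subset _ _) (filter_subset _ _))
  rw [card_union_of_disjoint hdisj] at hH
  obtain ⟨s₀, hs₀H, hs₀⟩ := exists_subset_card_eq (s := H) (n := k) (by omega)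
  obtain ⟨x₀, hx₀, hc, -⟩ := hχ s₀ hs₀H hs₀
  have hck : χ s₀ < k := hc ▸ hs₀ ▸ card_lt_card (filter_ssubset.2 ⟨x₀, hx₀, lt_irrefl _⟩)
  obtain ⟨L, hL, hLc⟩ := exists_subset_card_eq (s := left) (n := χ s₀) (by omega)
  obtain ⟨R, hR, hRc⟩ := exists_subset_card_eq (s := right) (n := k - 1 - χ s₀) (by omega)
  have hLm : ∀ y ∈ L, y < m ∧ f y < b := fun y hy => (mem_filter.1 (hL hy)).2
  have hRm : ∀ y ∈ R, m < y ∧ f y < b := fun y hy => (mem_filter.1 (hR hy)).2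
  have hmLR : m ∉ L ∪ R := fun hmem => (mem_union.1 hmem).elim
    (fun h => lt_irrefl m (hLm m h).1) (fun h => lt_irrefl m (hRm m h).1)
  let s := insert m (L ∪ R)
  have hsH : s ⊆ H :=
    insert_subset hm (union_subset (hL.trans (filter_subset _ _)) (hR.trans (filter_subset _ _)))
  have hs : s.card = k := by
    rw [card_insert_of_notMem hmLR, card_union_of_disjoint (hdisj.mono hL hR)]
    omega
  obtain ⟨x, hx, hxpos, hxmate⟩ := hχ s hsH hs
  rw [hmono s hsH s₀ hs₀H hs hs₀, ← hLc,
    ← filter_lt_insert_union (fun y hy => (hLm y hy).1) fun y hy => (hRm y hy).1] at hxpos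
  obtain rfl := eq_of_card_filter_lt_eq hx (mem_insert_self _ _) hxpos
  refine hxmate b ⟨hmb, fun y hy hyx => ?_⟩
  rcases mem_union.1 ((mem_insert.1 hy).resolve_left hyx) with hy | hy
  exacts [(hLm y hy).2, (hRm y hy).2]

end Monochromatic

theorem card_filter_orderEmbOfFin {ι : Type*} [LinearOrder ι] {s : Finset ι} {q : ℕ}
    (h : s.card = q) (p : ι → Prop) [DecidablePred p] :
    #{j : Fin q | p (s.orderEmbOfFin h j)} = #{i ∈ s | p i} := by
  conv_rhs => rw [← map_orderEmbOfFin_univ s h, filter_map, card_map]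
  rfl

theorem MonoSet.subset {n c k : ℕ} {χ : Finset (Fin n) → Fin c} {H H' : Finset (Fin n)}
    (h : MonoSet k χ H) (hH : H' ⊆ H) : MonoSet k χ H' :=
  fun s t hs ht => h s t (hs.trans hH) (ht.trans hH)

theorem exists_monoSet_card_eq {k n q : ℕ} (χ : Finset (Fin n) → Fin k)
    (hq : q ≤ monoRamsey k n) : ∃ H : Finset (Fin n), H.card = q ∧ MonoSet k χ H := by
  set S := {c | ∃ H : Finset (Fin n), H.card = c ∧ MonoSet k χ H}
  have hS : BddAbove S := ⟨n, by rintro _ ⟨H, rfl, -⟩; simpa using card_le_univ H⟩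
  have h0 : 0 ∈ S := by
    refine ⟨(∅ : Finset (Fin n)), rfl, fun s t hs ht _ _ => ?_⟩
    rw [subset_empty.1 hs, subset_empty.1 ht]
  obtain ⟨H, hH, hmono⟩ := Nat.sSup_mem ⟨0, h0⟩ hS
  have hle : monoRamsey k n ≤ sSup S := Nat.sInf_le ⟨χ, rfl⟩
  obtain ⟨H', hH', hcard⟩ := exists_subset_card_eq (hq.trans (hle.trans hH.ge))
  exact ⟨H', hcard, hmono.subset hH'⟩

open scoped Classical in
/-- The Ramsey step: colour a `k`-subset of an `n`-subset of `A` by the position of a mateless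
element, and enumerate a monochromatic set of size `q`. -/
theorem exists_embedding_few_below {α : Type*} [PartialOrder α] {A : Finset α} {B : Set α}
    {k n q : ℕ} (hk : 2 ≤ k) (hbip : IsBipartition (A : Set α) B) (hfree : SkFree α k)
    (hA : n ≤ A.card) (hq : q ≤ monoRamsey k n) :
    ∃ u : Fin q ↪ α, (∀ j, u j ∈ A) ∧ ∀ m y, Incomp (u m) y →
      #{j | j < m ∧ u j < y} ≤ k - 2 ∨ #{j | m < j ∧ u j < y} ≤ k - 2 := by
  let v : Fin n ↪ α :=
    (Fin.castLEEmb hA).trans (A.equivFin.symm.toEmbedding.trans (Function.Embedding.subtype _))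
  have hvA : ∀ i, v i ∈ A := fun i => (A.equivFin.symm _).2
  have hcol : ∀ s : Finset (Fin n), ∃ c : Fin k, s.card = k →
      ∃ x ∈ s, #{y ∈ s | y < x} = c ∧ ∀ b, ¬ IsMateIn v s x b := by
    intro s
    by_cases hs : s.card = k
    · obtain ⟨x, hx, hmate⟩ := exists_forall_not_isMateIn hk hbip hfree v.injective hvA hs
      exact ⟨⟨_, hs ▸ card_lt_card (filter_ssubset.2 ⟨x, hx, lt_irrefl x⟩)⟩,
        fun _ => ⟨x, hx, rfl, hmate⟩⟩
    · exact ⟨⟨0, by omega⟩, fun h => absurd h hs⟩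
  choose χ hχ using hcol
  obtain ⟨H, hH, hmono⟩ := exists_monoSet_card_eq χ hq
  let e := H.orderEmbOfFin hH
  refine ⟨e.toEmbedding.trans v, fun j => hvA _, fun m y hmy => ?_⟩
  have := few_below_of_monochromatic (f := v) (χ := fun s => χ s) (fun s _ hs => hχ s hs)
    (fun s hs s' hs' h h' => congrArg Fin.val (hmono s s' hs hs' h h'))
    (orderEmbOfFin_mem H hH m) hmy
  convert this using 2 <;> rw [← card_filter_orderEmbOfFin hH] <;> simp [e]

theorem two_add_two_mul_le_three_mul_two_pow_mul_log {k q : ℕ} {f : ℝ} (hk : 2 ≤ k)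
    (hq : 2 ≤ q) (hf : f ≤ 2 ^ (k - 2 + 1) * (2 * ((k - 2 : ℕ) : ℝ) + 2) * Real.log q + 1) :
    2 + 2 * f ≤ 3 * k * 2 ^ k * Real.log q := by
  obtain ⟨t, rfl⟩ : ∃ t, k = t + 2 := ⟨k - 2, by omega⟩
  simp only [Nat.add_sub_cancel] at hf
  have hL : 0.69 < Real.log q :=
    Real.log_two_gt_d9.trans_le' (by norm_num) |>.trans_le
      (Real.log_le_log two_pos (by exact_mod_cast hq))
  have hP : (1 : ℝ) ≤ 2 ^ t := one_le_pow₀ one_le_two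
  have hPL : 0.69 ≤ 2 ^ t * Real.log q := by nlinarith
  have ht : (0 : ℝ) ≤ t := t.cast_nonneg
  rw [pow_succ] at hf
  push_cast
  rw [pow_add]
  nlinarith

theorem stmt10_general {α : Type*} [Fintype α] [PartialOrder α]
    {k n : ℕ} (hk : 3 ≤ k)
    (A B : Finset α) (hbip : IsBipartition (A : Set α) (B : Set α))
    (hfree : SkFree α k) (hA : n ≤ A.card) :
    ∀ q : ℕ, 2 ≤ q → q ≤ monoRamsey k n →
      ∃ Q : Finset α, Q ⊆ A ∧ Q.card = q ∧
        (orderDim α : ℝ) ≤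
          (orderDim {x : α // x ∉ Q} : ℝ) + 3 * k * 2 ^ k * Real.log q := by
  intro q hq hqr
  obtain ⟨u, huA, hfew⟩ := exists_embedding_few_below (by omega) hbip hfree hA hqr
  obtain ⟨𝓕, h𝓕, h𝓕card⟩ := exists_isIsolating (ι := Fin q) (k - 2) (by simpa using hq)
  refine ⟨univ.map u, fun x hx => ?_, by simp, ?_⟩
  · obtain ⟨j, -, rfl⟩ := mem_map.1 hx
    exact huA j
  have hdim := orderDim_le_of_few_below u (fun j => hbip.isMin (huA j)) hfew h𝓕
  calc (orderDim α : ℝ) ≤ orderDim {x // x ∉ univ.map u} + (2 + 2 * (𝓕.card : ℝ)) := by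
        exact_mod_cast hdim
    _ ≤ _ := by
        gcongr
        exact two_add_two_mul_le_three_mul_two_pow_mul_log (by omega) hq
          (by simpa using h𝓕card)

/-- Lemma 3.3 (removal lemma): with `c = 3k·2^k`, for every `2 ≤ q ≤ r(n)` there
is `Q ⊆ A` of size `q` with `dim(P) ≤ dim(P − Q) + c·ln q`. -/
theorem stmt10 {α : Type*} [Fintype α] [PartialOrder α] [DecidableEq α]
    {k n : ℕ} (hk : 3 ≤ k)
    (A B : Finset α) (hbip : IsBipartition (A : Set α) (B : Set α))
    (hfree : SkFree α k) (hA : n ≤ A.card) (hrn : 2 ≤ monoRamsey k n) :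
    ∀ q : ℕ, 2 ≤ q → q ≤ monoRamsey k n →
      ∃ Q : Finset α, Q ⊆ A ∧ Q.card = q ∧
        (orderDim α : ℝ) ≤
          (orderDim {x : α // x ∉ Q} : ℝ) + 3 * k * 2 ^ k * Real.log q :=
  stmt10_general hk A B hbip hfree hA
end
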